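/- arXiv:0803.4381 — 5 statements merged into one kernel-verified Lean document; each statement's English description precedes it below -/
import Mathlib

section
/- If A◊B is regular, then for every element (a, P, b) ∈ A◊B, either P = aP₁b for some P₁ ⊆ A×B, or P = caP₁bd for some P₁ ⊆ A×B and some c ∈ a⁻¹, d ∈ b⁻¹ (where a⁻¹ denotes the set of inverses of a). -/
/-- A monoid is regular if every element has an inverse in the von Neumann sense. -/
def RegM (M : Type*) [Monoid M] : Prop := ∀ a : M, ∃ b : M, a * b * a = a ∧ b * a * b = b

section Sch
variable {A B : Type*} [Monoid A] [Monoid B]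

/-- `Pb = {(c, db) : (c,d) ∈ P}` -/
def sR (P : Set (A × B)) (b : B) : Set (A × B) := {q | ∃ p ∈ P, q = (p.1, p.2 * b)}

/-- `aP = {(ac, d) : (c,d) ∈ P}` -/
def sL (a : A) (P : Set (A × B)) : Set (A × B) := {q | ∃ p ∈ P, q = (a * p.1, p.2)}

/-- `aPb = {(ac, db) : (c,d) ∈ P}` -/
def sLR (a : A) (P : Set (A × B)) (b : B) : Set (A × B) :=
  {q | ∃ p ∈ P, q = (a * p.1, p.2 * b)}

/-- Multiplication of the Schützenberger product `A ◊ B`. -/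
def sMul (x y : A × Set (A × B) × B) : A × Set (A × B) × B :=
  (x.1 * y.1, sR x.2.1 y.2.2 ∪ sL x.1 y.2.1, x.2.2 * y.2.2)

/-- The identity of the Schützenberger product. -/
def sOne : A × Set (A × B) × B := (1, ∅, 1)

/-- Regularity of the Schützenberger product `A ◊ B`. -/
def SReg (A B : Type*) [Monoid A] [Monoid B] : Prop :=
  ∀ x : A × Set (A × B) × B, ∃ y : A × Set (A × B) × B,
    sMul (sMul x y) x = x ∧ sMul (sMul y x) y = y

end Sch

/-! Regularity of `A ◊ B` applied to `(a, {p}, b)` forces `p = (a * p₁, p₂ * b)` for some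
`(p₁, p₂)`, read off the equation `x y x = x` on middle components. Hence every `P` equals
`a P₁ b` with `P₁` the preimage of `P` under `(p₁, p₂) ↦ (a * p₁, p₂ * b)`. -/

section
variable {A B : Type*} [Monoid A] [Monoid B]

theorem sLR_preimage_eq {a : A} {b : B} {P : Set (A × B)}
    (hP : ∀ p ∈ P, ∃ q : A × B, (a * q.1, q.2 * b) = p) :
    sLR a {q | (a * q.1, q.2 * b) ∈ P} b = P := by
  ext p
  constructor
  · rintro ⟨q, hq, rfl⟩
    exact hq
  · intro hp
    obtain ⟨q, rfl⟩ := hP p hp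
    exact ⟨q, hp, rfl⟩

theorem SReg.exists_mul_eq (h : SReg A B) (a : A) (b : B) (p : A × B) :
    ∃ q : A × B, (a * q.1, q.2 * b) = p := by
  obtain ⟨y, hxyx, -⟩ := h (a, {p}, b)
  have hmid : sR (sR {p} y.2.2 ∪ sL a y.2.1) b ∪ sL (a * y.1) {p} = {p} :=
    congrArg (·.2.1) hxyx
  have hleft : (a * y.1 * p.1, p.2) = p := by
    rw [← Set.mem_singleton_iff, ← hmid]
    exact Or.inr ⟨p, rfl, rfl⟩
  have hright : (p.1, p.2 * y.2.2 * b) = p := by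
    rw [← Set.mem_singleton_iff, ← hmid]
    exact Or.inl ⟨(p.1, p.2 * y.2.2), Or.inl ⟨p, rfl, rfl⟩, rfl⟩
  refine ⟨(y.1 * p.1, p.2 * y.2.2), Prod.ext ?_ ?_⟩
  · simpa only [mul_assoc] using congrArg Prod.fst hleft
  · simpa only using congrArg Prod.snd hright

end

/-- If `A ◊ B` is regular then every middle component `P` has the form `aP₁b`
or `caP₁bd` for some `P₁ ⊆ A × B`, `c ∈ a⁻¹` and `d ∈ b⁻¹`. -/
theorem middle_component_form_of_regular (A B : Type*) [Monoid A] [Monoid B]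
    (h : SReg A B) :
    ∀ (a : A) (P : Set (A × B)) (b : B),
      (∃ P₁ : Set (A × B), P = sLR a P₁ b) ∨
      (∃ (P₁ : Set (A × B)) (c : A) (d : B),
        (a * c * a = a ∧ c * a * c = c) ∧ (b * d * b = b ∧ d * b * d = d) ∧
        P = sLR (c * a) P₁ (b * d)) :=
  fun a _ b => Or.inl ⟨_, (sLR_preimage_eq fun p _ => h.exists_mul_eq a b p).symm⟩
end

section
/- Suppose A and B are regular monoids and for every (a, P, b) ∈ A◊B, either P = aP₁b or P = caP₁bd for some P₁ ⊆ A×B, c ∈ a⁻¹, d ∈ b⁻¹. Then the Schützenberger product A◊B is regular. -/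
/-!
Taking `P = {(1, 1)}` in the hypothesis gives, for every idempotent `g`, a right inverse of `g` or
of the idempotent `c * g` in `A` (and dually a left inverse in `B`); an idempotent with a one-sided
inverse is `1`, so `1` is the only idempotent of `A` and of `B`. A regular monoid with no other
idempotent is a group, because `a * c` and `c * a` are idempotent when `a * c * a = a`. Over groups,
`(a⁻¹, a⁻¹ P b⁻¹, b⁻¹)` is an inverse of `(a, P, b)` in `A ◊ B`.
-/

section SetAlgebra
variable {A B : Type*}

@[simp] lemma sR_one [Monoid B] (P : Set (A × B)) : sR P 1 = P := by ext; simp [sR]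

@[simp] lemma sL_one [Monoid A] (P : Set (A × B)) : sL 1 P = P := by ext; simp [sL]

lemma sR_sR [Monoid B] (P : Set (A × B)) (b b' : B) : sR (sR P b) b' = sR P (b * b') := by
  ext; simp [sR, mul_assoc]

lemma sL_sL [Monoid A] (a a' : A) (P : Set (A × B)) : sL a (sL a' P) = sL (a * a') P := by
  ext; simp [sL, mul_assoc, -Prod.exists]

lemma sR_sL [Monoid A] [Monoid B] (a : A) (P : Set (A × B)) (b : B) :
    sR (sL a P) b = sL a (sR P b) := by
  ext; simp [sR, sL, -Prod.exists]

lemma sLR_eq_sL_sR [Monoid A] [Monoid B] (a : A) (P : Set (A × B)) (b : B) :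
    sLR a P b = sL a (sR P b) := by
  ext; simp [sLR, sR, sL]

lemma sMul_mk [Monoid A] [Monoid B] (a a' : A) (P P' : Set (A × B)) (b b' : B) :
    sMul (a, P, b) (a', P', b') = (a * a', sR P b' ∪ sL a P', b * b') := rfl

end SetAlgebra

theorem sReg_of_forall_isUnit {A B : Type*} [Monoid A] [Monoid B] (hA : ∀ a : A, IsUnit a)
    (hB : ∀ b : B, IsUnit b) : SReg A B := by
  rintro ⟨a, P, b⟩
  obtain ⟨u, rfl⟩ := hA a
  obtain ⟨v, rfl⟩ := hB b
  refine ⟨(↑u⁻¹, sLR ↑u⁻¹ P ↑v⁻¹, ↑v⁻¹), ?_, ?_⟩ <;>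
  simp only [sMul_mk, sLR_eq_sL_sR, sR_sR, sL_sL, sR_sL, Units.mul_inv, Units.inv_mul,
    sR_one, sL_one, one_mul, Set.union_self]

section Idempotent
variable {M : Type*} [Monoid M] {a c e x : M}

lemma IsIdempotentElem.eq_one_of_mul_eq_one_right (he : IsIdempotentElem e) (h : e * x = 1) :
    e = 1 :=
  calc e = e * (e * x) := by rw [h, mul_one]
    _ = 1 := by rw [he.mul_self_mul, h]

lemma IsIdempotentElem.eq_one_of_mul_eq_one_left (he : IsIdempotentElem e) (h : x * e = 1) :
    e = 1 :=
  calc e = x * e * e := by rw [h, one_mul]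
    _ = 1 := by rw [he.mul_mul_self, h]

lemma isIdempotentElem_mul_of_mul_mul_eq_self (h : a * c * a = a) : IsIdempotentElem (a * c) := by
  rw [IsIdempotentElem, ← mul_assoc, h]

lemma isIdempotentElem_mul_swap_of_mul_mul_eq_self (h : a * c * a = a) :
    IsIdempotentElem (c * a) := by
  rw [IsIdempotentElem, mul_assoc, ← mul_assoc a, h]

lemma isUnit_of_mul_mul_eq_self (hM : ∀ e : M, IsIdempotentElem e → e = 1) (h : a * c * a = a) :
    IsUnit a :=
  isUnit_iff_exists.2 ⟨c, hM _ (isIdempotentElem_mul_of_mul_mul_eq_self h),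
    hM _ (isIdempotentElem_mul_swap_of_mul_mul_eq_self h)⟩

end Idempotent

def SchuetzenbergerCondition (A B : Type*) [Monoid A] [Monoid B] : Prop :=
  ∀ (a : A) (P : Set (A × B)) (b : B),
    (∃ P₁ : Set (A × B), P = sLR a P₁ b) ∨
    (∃ (P₁ : Set (A × B)) (c : A) (d : B),
      (a * c * a = a ∧ c * a * c = c) ∧ (b * d * b = b ∧ d * b * d = d) ∧
      P = sLR (c * a) P₁ (b * d))

lemma exists_mul_eq_one_of_singleton_eq_sLR {A B : Type*} [Monoid A] [Monoid B] {a : A}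
    {P : Set (A × B)} {b : B} (h : {(1, 1)} = sLR a P b) :
    (∃ x, a * x = 1) ∧ ∃ y, y * b = 1 := by
  obtain ⟨p, -, hp⟩ : ((1 : A), (1 : B)) ∈ sLR a P b := h ▸ rfl
  exact ⟨⟨p.1, (congrArg Prod.fst hp).symm⟩, ⟨p.2, (congrArg Prod.snd hp).symm⟩⟩

namespace SchuetzenbergerCondition
variable {A B : Type*} [Monoid A] [Monoid B]

lemma eq_one_of_isIdempotentElem_left (h : SchuetzenbergerCondition A B) {g : A}
    (hg : IsIdempotentElem g) : g = 1 := by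
  rcases h g {(1, 1)} 1 with ⟨P₁, hP₁⟩ | ⟨P₁, c, _, ⟨hc, -⟩, -, hP₁⟩
  · obtain ⟨⟨x, hx⟩, -⟩ := exists_mul_eq_one_of_singleton_eq_sLR hP₁
    exact hg.eq_one_of_mul_eq_one_right hx
  · obtain ⟨⟨x, hx⟩, -⟩ := exists_mul_eq_one_of_singleton_eq_sLR hP₁
    have hcg : c * g = 1 :=
      (isIdempotentElem_mul_swap_of_mul_mul_eq_self hc).eq_one_of_mul_eq_one_right hx
    calc g = c * g * g := by rw [hcg, one_mul]
      _ = 1 := by rw [hg.mul_mul_self, hcg]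

lemma eq_one_of_isIdempotentElem_right (h : SchuetzenbergerCondition A B) {g : B}
    (hg : IsIdempotentElem g) : g = 1 := by
  rcases h 1 {(1, 1)} g with ⟨P₁, hP₁⟩ | ⟨P₁, _, d, -, ⟨hd, -⟩, hP₁⟩
  · obtain ⟨-, ⟨y, hy⟩⟩ := exists_mul_eq_one_of_singleton_eq_sLR hP₁
    exact hg.eq_one_of_mul_eq_one_left hy
  · obtain ⟨-, ⟨y, hy⟩⟩ := exists_mul_eq_one_of_singleton_eq_sLR hP₁
    have hgd : g * d = 1 :=
      (isIdempotentElem_mul_of_mul_mul_eq_self hd).eq_one_of_mul_eq_one_left hy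
    calc g = g * (g * d) := by rw [hgd, mul_one]
      _ = 1 := by rw [hg.mul_self_mul, hgd]

end SchuetzenbergerCondition

/-- If `A` and `B` are regular and every middle component has the form `aP₁b` or
`caP₁bd`, then `A ◊ B` is regular. -/
theorem schuetzenberger_regular_of_conditions (A B : Type*) [Monoid A] [Monoid B]
    (hA : RegM A) (hB : RegM B)
    (hP : ∀ (a : A) (P : Set (A × B)) (b : B),
      (∃ P₁ : Set (A × B), P = sLR a P₁ b) ∨
      (∃ (P₁ : Set (A × B)) (c : A) (d : B),
        (a * c * a = a ∧ c * a * c = c) ∧ (b * d * b = b ∧ d * b * d = d) ∧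
        P = sLR (c * a) P₁ (b * d))) :
    SReg A B := by
  have hS : SchuetzenbergerCondition A B := hP
  refine sReg_of_forall_isUnit (fun a => ?_) (fun b => ?_)
  · obtain ⟨c, hc, -⟩ := hA a
    exact isUnit_of_mul_mul_eq_self (fun _ => hS.eq_one_of_isIdempotentElem_left) hc
  · obtain ⟨d, hd, -⟩ := hB b
    exact isUnit_of_mul_mul_eq_self (fun _ => hS.eq_one_of_isIdempotentElem_right) hd
end

section
/- Let a ∈ A, b ∈ B with c ∈ a⁻¹, d ∈ b⁻¹, and P₁ ⊆ A×B. If P = aP₁b, then the element (c, caP₁bd, d) is an inverse of (a, P, b) in A◊B, i.e. (a,P,b)(c,caP₁bd,d)(a,P,b) = (a,P,b) and (c,caP₁bd,d)(a,P,b)(c,caP₁bd,d) = (c,caP₁bd,d). -/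
/-! Sets of the form `x P₁ y` are closed under `P ↦ Pb` and `P ↦ aP`, so each product in the
two identities has set component `x P₁ y ∪ x' P₁ y'`; the inverse identities make the two
translates coincide, and the union collapses. -/

section
variable {A B : Type*} [Monoid A] [Monoid B]

theorem sR_sLR (a : A) (P : Set (A × B)) (b b' : B) :
    sR (sLR a P b) b' = sLR a P (b * b') := by
  ext q
  simp [sR, sLR, mul_assoc]

theorem sL_sLR (a' a : A) (P : Set (A × B)) (b : B) :
    sL a' (sLR a P b) = sLR (a' * a) P b := by
  ext q
  simp [sL, sLR, mul_assoc]

theorem sMul_sLR (x x' : A) (y y' : B) (a a' : A) (P : Set (A × B)) (b b' : B) :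
    sMul (x, sLR a P b, y) (x', sLR a' P b', y') =
      (x * x', sLR a P (b * y') ∪ sLR (x * a') P b', y * y') := by
  simp only [sMul, sR_sLR, sL_sLR]

end

/-- If `P = aP₁b` then `(c, caP₁bd, d)` is an inverse of `(a, P, b)` in `A ◊ B`. -/
theorem explicit_inverse_in_schuetzenberger (A B : Type*) [Monoid A] [Monoid B]
    (a c : A) (b d : B) (P₁ : Set (A × B))
    (hac : a * c * a = a) (hca : c * a * c = c)
    (hbd : b * d * b = b) (hdb : d * b * d = d) :
    sMul (sMul (a, sLR a P₁ b, b) (c, sLR (c * a) P₁ (b * d), d)) (a, sLR a P₁ b, b)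
        = (a, sLR a P₁ b, b) ∧
    sMul (sMul (c, sLR (c * a) P₁ (b * d), d) (a, sLR a P₁ b, b))
        (c, sLR (c * a) P₁ (b * d), d) = (c, sLR (c * a) P₁ (b * d), d) := by
  constructor <;>
    simp only [sMul_sLR, ← mul_assoc, hac, hca, hbd, hdb, Set.union_self]
end

section
/- The new version of the Schützenberger product A◊ᵥB, defined on the set A^(⊕B) × P(A^(⊕B) × B) × B with multiplication (f, P₁, b₁)(g, P₂, b₂) = (f·ᵇ¹g, P₁b₂ ∪ P₂, b₁b₂), where (x)(ᵇ¹g) = (xb₁)g, is a monoid with identity (1̄, ∅, 1_B). -/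
section VSch
variable {A B : Type*} [Monoid A] [Monoid B]

/-- `Pb = {(h, cb) : (h,c) ∈ P}` -/
def vR (P : Set ((B → A) × B)) (b : B) : Set ((B → A) × B) :=
  {q | ∃ p ∈ P, q = (p.1, p.2 * b)}

/-- The translate `ᵘh`, defined by `(x)(ᵘh) = (xu)h`. -/
def tr (u : B) (h : B → A) : B → A := fun x => h (x * u)

/-- Multiplication of the new version `A ◊ᵥ B` of the Schützenberger product:
`(f,P₁,b₁)(g,P₂,b₂) = (f·ᵇ¹g, P₁b₂ ∪ P₂, b₁b₂)`. -/
def vMul (x y : (B → A) × Set ((B → A) × B) × B) : (B → A) × Set ((B → A) × B) × B :=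
  (x.1 * tr x.2.2 y.1, vR x.2.1 y.2.2 ∪ y.2.1, x.2.2 * y.2.2)

/-- The identity of `A ◊ᵥ B`. -/
def vOne : (B → A) × Set ((B → A) × B) × B := (1, ∅, 1)

/-- Membership in `A ◊ᵥ B = A^(⊕B) × P(A^(⊕B) × B) × B`: all function components
are finitely supported. -/
def InV (x : (B → A) × Set ((B → A) × B) × B) : Prop :=
  (Function.mulSupport x.1).Finite ∧ ∀ p ∈ x.2.1, (Function.mulSupport p.1).Finite

/-- Regularity of `A ◊ᵥ B`. -/
def VReg (A B : Type*) [Monoid A] [Monoid B] : Prop :=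
  ∀ x : (B → A) × Set ((B → A) × B) × B, InV x →
    ∃ y, InV y ∧ vMul (vMul x y) x = x ∧ vMul (vMul y x) y = y

end VSch

/-!
`B` acts on `A^B` on the left by translation `h ↦ ᵘh`, through monoid endomorphisms, and on
`P(A^B × B)` on the right by `P ↦ Pu`, through union-preserving maps; this is exactly what makes
the semidirect-product-like multiplication of `A ◊ᵥ B` associative. Translation preserves finite
support because the support of `ᵘh` is the preimage of that of `h` under `x ↦ xu`, which is
injective when `u` is a unit; when `B` is finite there is nothing to check.
-/

open Function

section Translation

variable {A B : Type*} [Monoid B]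

lemma vR_union (P Q : Set ((B → A) × B)) (b : B) : vR (P ∪ Q) b = vR P b ∪ vR Q b := by
  ext q
  simp only [vR, Set.mem_union, Set.mem_ofPred_eq, or_and_right, exists_or]

lemma vR_vR (P : Set ((B → A) × B)) (b c : B) : vR (vR P b) c = vR P (b * c) := by
  ext q
  simp only [vR, Set.mem_ofPred_eq]
  constructor
  · rintro ⟨_, ⟨p, hp, rfl⟩, rfl⟩
    exact ⟨p, hp, by simp [mul_assoc]⟩
  · rintro ⟨p, hp, rfl⟩
    exact ⟨(p.1, p.2 * b), ⟨p, hp, rfl⟩, by simp [mul_assoc]⟩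

lemma vR_empty (b : B) : vR (∅ : Set ((B → A) × B)) b = ∅ := by
  simp [vR]

lemma vR_one (P : Set ((B → A) × B)) : vR P 1 = P := by
  ext q
  simp [vR]

lemma tr_tr (u v : B) (h : B → A) : tr u (tr v h) = tr (u * v) h := by
  funext x
  simp [tr, mul_assoc]

lemma one_tr (h : B → A) : tr 1 h = h := by
  funext x
  simp [tr]

lemma tr_mul [Mul A] (u : B) (g h : B → A) : tr u (g * h) = tr u g * tr u h := rfl

lemma tr_one [One A] (u : B) : tr u (1 : B → A) = 1 := rfl

lemma mulSupport_tr [One A] (u : B) (h : B → A) :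
    mulSupport (tr u h) = (· * u) ⁻¹' mulSupport h := rfl

lemma finite_mulSupport_tr [One A] {u : B} {h : B → A} (hh : (mulSupport h).Finite)
    (hu : Finite B ∨ IsRightRegular u) : (mulSupport (tr u h)).Finite := by
  rcases hu with hB | hu
  · exact Set.toFinite _
  · rw [mulSupport_tr]
    exact hh.preimage hu.injOn

end Translation

section Product

variable {A B : Type*} [Monoid A] [Monoid B]

lemma inV_vOne : InV (vOne : (B → A) × Set ((B → A) × B) × B) := by
  simp [InV, vOne]

lemma inV_vMul (hB : ∀ u : B, Finite B ∨ IsRightRegular u)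
    {x y : (B → A) × Set ((B → A) × B) × B} (hx : InV x) (hy : InV y) : InV (vMul x y) := by
  refine ⟨(hx.1.union (finite_mulSupport_tr hy.1 (hB _))).subset (mulSupport_mul _ _), ?_⟩
  rintro p (⟨q, hq, rfl⟩ | hp)
  · exact hx.2 q hq
  · exact hy.2 p hp

lemma vMul_assoc (x y z : (B → A) × Set ((B → A) × B) × B) :
    vMul (vMul x y) z = vMul x (vMul y z) := by
  simp only [vMul, tr_mul, tr_tr, mul_assoc, vR_union, vR_vR, Set.union_assoc]

lemma vOne_vMul (x : (B → A) × Set ((B → A) × B) × B) : vMul vOne x = x := by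
  simp only [vMul, vOne, one_tr, one_mul, vR_empty, Set.empty_union]

lemma vMul_vOne (x : (B → A) × Set ((B → A) × B) × B) : vMul x vOne = x := by
  simp only [vMul, vOne, tr_one, mul_one, vR_one, Set.union_empty]

end Product


/-- `A ◊ᵥ B` (with `B` a finite monoid or a group) is a monoid with identity
`(1̄, ∅, 1_B)`: the carrier is closed under the multiplication, the
multiplication is associative, and `(1̄, ∅, 1_B)` is a two-sided identity. -/
theorem vschuetzenberger_is_monoid (A B : Type*) [Monoid A] [Monoid B]
    (hB : Finite B ∨ ∀ b : B, IsUnit b) :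
    InV (vOne : (B → A) × Set ((B → A) × B) × B) ∧
    (∀ x y : (B → A) × Set ((B → A) × B) × B, InV x → InV y → InV (vMul x y)) ∧
    (∀ x y z : (B → A) × Set ((B → A) × B) × B,
      vMul (vMul x y) z = vMul x (vMul y z)) ∧
    (∀ x : (B → A) × Set ((B → A) × B) × B, vMul vOne x = x ∧ vMul x vOne = x) := by
  have hreg : ∀ u : B, Finite B ∨ IsRightRegular u := fun u =>
    hB.imp_right fun hunit => (hunit u).isRegular.right
  exact ⟨inV_vOne, fun _ _ => inV_vMul hreg, vMul_assoc, fun x => ⟨vOne_vMul x, vMul_vOne x⟩⟩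
end

section
/- If A◊ᵥB is regular, then A and B are regular monoids. -/
section VSch
variable {A B : Type*} [Monoid A] [Monoid B]

@[simp]
lemma vMul_snd_snd (x y : (B → A) × Set ((B → A) × B) × B) :
    (vMul x y).2.2 = x.2.2 * y.2.2 :=
  rfl

lemma vMul_fst_apply (x y : (B → A) × Set ((B → A) × B) × B) (c : B) :
    (vMul x y).1 c = x.1 c * y.1 (c * x.2.2) :=
  rfl

lemma regM_right_of_vReg (h : VReg A B) : RegM B := fun b => by
  obtain ⟨y, -, hxyx, hyxy⟩ := h (1, ∅, b) ⟨by simp, by simp⟩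
  exact ⟨y.2.2, congrArg (·.2.2) hxyx, congrArg (·.2.2) hyxy⟩

/-- An inverse of `(δ₁ a, ∅, 1)` lies over `1 ∈ B`, so evaluating its function component at `1`
gives an inverse of `a`. -/
lemma regM_left_of_vReg (h : VReg A B) : RegM A := fun a => by
  classical
  have hfin : (Function.mulSupport (Pi.mulSingle (1 : B) a)).Finite :=
    (Set.finite_singleton 1).subset Pi.mulSupport_mulSingle_subset
  obtain ⟨y, -, hxyx, hyxy⟩ := h (Pi.mulSingle 1 a, ∅, 1) ⟨hfin, by simp⟩
  have hy : y.2.2 = 1 := by simpa using congrArg (·.2.2) hxyx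
  refine ⟨y.1 1, ?_, ?_⟩
  · simpa [vMul_fst_apply, hy] using congrFun (congrArg (·.1) hxyx) 1
  · simpa [vMul_fst_apply, hy] using congrFun (congrArg (·.1) hyxy) 1

end VSch

theorem regular_of_vschuetzenberger_regular_general (A B : Type*) [Monoid A] [Monoid B]
    (h : VReg A B) :
    RegM A ∧ RegM B :=
  ⟨regM_left_of_vReg h, regM_right_of_vReg h⟩

/-- If `A ◊ᵥ B` is regular then `A` and `B` are regular. -/
theorem regular_of_vschuetzenberger_regular (A B : Type*) [Monoid A] [Monoid B]
    (hB : Finite B ∨ ∀ b : B, IsUnit b) (h : VReg A B) :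
    RegM A ∧ RegM B :=
  regular_of_vschuetzenberger_regular_general A B h
end
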